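/- Let Y_0, Y_1, ..., Y_n be a martingale with respect to a filtration F_0 ⊆ F_1 ⊆ ... ⊆ F_n, with |Y_k - Y_{k-1}| ≤ M almost surely for all k, and suppose the predictable quadratic variation W_n = ∑_{j=1}^n E[(Y_j - Y_{j-1})^2 | F_{j-1}] satisfies W_n ≤ Δ^2 almost surely. Then for every λ > 0, Pr[|Y_n - Y_0| ≥ λ] ≤ 2 exp(-λ^2 / (2(Δ^2 + Mλ/3))). -/

import Mathlib

/-!
Comparing the tail of the exponential series with a geometric series (using
`2 * 3 ^ n ≤ (n + 2)!`) gives `exp (θ x) ≤ 1 + θ x + c x²` for `|x| ≤ M`, where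
`c = θ² / (2 (1 - θ M / 3))` and `θ M < 3`. Since martingale increments have conditional mean
zero, conditioning this bound on `ℱ k` shows that `exp (θ (Y k - Y 0) - c W k)`, with `W` the
predictable quadratic variation, has expectation at most `1`. As `W n ≤ Δ²`, the moment generating
function of `Y n - Y 0` at `θ` is at most `exp (c Δ²)`, and the Chernoff bound with
`θ = λ / (Δ² + M λ / 3)` gives the upper tail; the lower tail is the upper tail of `-Y`.
-/

open MeasureTheory ProbabilityTheory Real
open scoped Nat

theorem exp_le_one_add_add_sq_div {v u : ℝ} (hv : |v| ≤ u) (hu : u < 3) :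
    exp v ≤ 1 + v + v ^ 2 / (2 * (1 - u / 3)) := by
  have hu0 : 0 ≤ u := (abs_nonneg v).trans hv
  have htail : HasSum (fun n : ℕ => v ^ (n + 2) / (n + 2)!) (exp v - (1 + v)) := by
    rw [Real.exp_eq_exp_ℝ]
    simpa [Finset.sum_range_succ] using
      (hasSum_nat_add_iff' 2).2 (NormedSpace.expSeries_div_hasSum_exp v)
  have hgeom : HasSum (fun n : ℕ => v ^ 2 / 2 * (u / 3) ^ n) (v ^ 2 / 2 * (1 - u / 3)⁻¹) :=
    (hasSum_geometric_of_lt_one (by positivity) (by linarith)).mul_left _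
  have hterm (n : ℕ) : v ^ (n + 2) / (n + 2)! ≤ v ^ 2 / 2 * (u / 3) ^ n := by
    have hpow : v ^ (n + 2) ≤ v ^ 2 * u ^ n :=
      calc v ^ (n + 2) ≤ |v| ^ (n + 2) := (le_abs_self _).trans (abs_pow v _).le
      _ = v ^ 2 * |v| ^ n := by rw [pow_add, sq_abs, mul_comm]
      _ ≤ v ^ 2 * u ^ n := by gcongr
    have hfact : (2 * 3 ^ n : ℝ) ≤ (n + 2)! := by
      exact_mod_cast (Nat.factorial_mul_pow_le_factorial (m := 2) (n := n)).trans_eq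
        (by rw [add_comm])
    calc v ^ (n + 2) / (n + 2)! ≤ v ^ 2 * u ^ n / (2 * 3 ^ n) :=
          div_le_div₀ (by positivity) hpow (by positivity) hfact
    _ = v ^ 2 / 2 * (u / 3) ^ n := by rw [div_pow]; ring
  have hsum : v ^ 2 / 2 * (1 - u / 3)⁻¹ = v ^ 2 / (2 * (1 - u / 3)) := by field_simp
  linarith [hasSum_le hterm htail hgeom]

theorem norm_exp_mul_le_of_abs_le {θ x M : ℝ} (hθ : 0 ≤ θ) (hx : |x| ≤ M) :
    ‖exp (θ * x)‖ ≤ exp (θ * M) := by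
  rw [Real.norm_of_nonneg (exp_pos _).le, exp_le_exp]
  exact mul_le_mul_of_nonneg_left ((le_abs_self x).trans hx) hθ

theorem condExp_exp_mul_le {Ω : Type*} {m m0 : MeasurableSpace Ω} {μ : Measure Ω}
    [IsFiniteMeasure μ] (hm : m ≤ m0) {X : Ω → ℝ} {M θ : ℝ} (hX : Integrable X μ)
    (hX0 : μ[X|m] =ᵐ[μ] 0) (hXM : ∀ᵐ ω ∂μ, |X ω| ≤ M) (hθ : 0 ≤ θ) (hθM : θ * M < 3) :
    μ[fun ω => exp (θ * X ω)|m] ≤ᵐ[μ]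
      fun ω => 1 + θ ^ 2 / (2 * (1 - θ * M / 3)) * μ[fun ω => X ω ^ 2|m] ω := by
  set c := θ ^ 2 / (2 * (1 - θ * M / 3))
  have hX2 : Integrable (fun ω => X ω ^ 2) μ := by
    refine .of_bound (hX.1.pow 2) (M ^ 2) ?_
    filter_upwards [hXM] with ω h
    rw [norm_pow, Real.norm_eq_abs]
    exact pow_le_pow_left₀ (abs_nonneg _) h 2
  have hexp : Integrable (fun ω => exp (θ * X ω)) μ := by
    refine .of_bound (continuous_exp.comp_aestronglyMeasurable (hX.1.const_mul θ))
      (exp (θ * M)) (hXM.mono fun ω h => norm_exp_mul_le_of_abs_le hθ h)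
  set q : Ω → ℝ := (fun _ => 1) + θ • X + c • fun ω => X ω ^ 2
  have hone : Integrable (fun _ => (1 : ℝ)) μ := integrable_const 1
  have hq : Integrable q μ := (hone.add (hX.smul θ)).add (hX2.smul c)
  have hpt : ∀ᵐ ω ∂μ, exp (θ * X ω) ≤ q ω := by
    filter_upwards [hXM] with ω h
    have hθX : |θ * X ω| ≤ θ * M := by
      rw [abs_mul, abs_of_nonneg hθ]
      exact mul_le_mul_of_nonneg_left h hθ
    calc exp (θ * X ω) ≤ 1 + θ * X ω + (θ * X ω) ^ 2 / (2 * (1 - θ * M / 3)) :=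
          exp_le_one_add_add_sq_div hθX hθM
    _ = q ω := by simp only [q, Pi.add_apply, Pi.smul_apply, smul_eq_mul]; ring
  have hlin : μ[q|m] =ᵐ[μ] (fun _ => 1) + θ • μ[X|m] + c • μ[fun ω => X ω ^ 2|m] := by
    rw [← condExp_const (μ := μ) hm (1 : ℝ)]
    exact (condExp_add (hone.add (hX.smul θ)) (hX2.smul c) m).trans
      (((condExp_add hone (hX.smul θ) m).trans
        (Filter.EventuallyEq.rfl.add (condExp_smul θ X m))).add (condExp_smul c _ m))
  filter_upwards [condExp_mono hexp hq hpt, hlin, hX0] with ω hle heq h0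
  rw [heq] at hle
  simpa only [Pi.add_apply, Pi.smul_apply, smul_eq_mul, h0, Pi.zero_apply, mul_zero, add_zero]
    using hle

section Freedman

variable {Ω : Type*} {m0 : MeasurableSpace Ω} {μ : Measure Ω} {ℱ : Filtration ℕ m0}
  {Y : ℕ → Ω → ℝ}

noncomputable def predictableQuadVar (μ : Measure Ω) (ℱ : Filtration ℕ m0) (Y : ℕ → Ω → ℝ)
    (k : ℕ) (ω : Ω) : ℝ :=
  ∑ j ∈ Finset.Icc 1 k, μ[fun ω' => (Y j ω' - Y (j - 1) ω') ^ 2|ℱ (j - 1)] ω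

theorem predictableQuadVar_succ (k : ℕ) (ω : Ω) :
    predictableQuadVar μ ℱ Y (k + 1) ω =
      predictableQuadVar μ ℱ Y k ω + μ[fun ω' => (Y (k + 1) ω' - Y k ω') ^ 2|ℱ k] ω := by
  rw [predictableQuadVar, Finset.sum_Icc_succ_top (by omega)]
  rfl

theorem predictableQuadVar_neg : predictableQuadVar μ ℱ (-Y) = predictableQuadVar μ ℱ Y := by
  have hsq (j : ℕ) : (fun ω => ((-Y) j ω - (-Y) (j - 1) ω) ^ 2) =
      fun ω => (Y j ω - Y (j - 1) ω) ^ 2 := by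
    funext ω
    simp only [Pi.neg_apply]
    ring
  funext k ω
  simp only [predictableQuadVar, hsq]

theorem stronglyMeasurable_predictableQuadVar {j k : ℕ} (hk : k ≤ j + 1) :
    StronglyMeasurable[ℱ j] (predictableQuadVar μ ℱ Y k) := by
  refine Finset.stronglyMeasurable_fun_sum _ fun i hi => stronglyMeasurable_condExp.mono
    (ℱ.mono ?_)
  have := (Finset.mem_Icc.1 hi).2
  omega

noncomputable def freedmanExpProcess (μ : Measure Ω) (ℱ : Filtration ℕ m0) (Y : ℕ → Ω → ℝ)
    (θ c : ℝ) (k : ℕ) (ω : Ω) : ℝ :=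
  exp (θ * (Y k ω - Y 0 ω) - c * predictableQuadVar μ ℱ Y k ω)

variable {M θ c : ℝ}

theorem freedmanExpProcess_succ (k : ℕ) (ω : Ω) :
    freedmanExpProcess μ ℱ Y θ c (k + 1) ω =
      freedmanExpProcess μ ℱ Y θ c k ω *
        exp (-(c * μ[fun ω' => (Y (k + 1) ω' - Y k ω') ^ 2|ℱ k] ω)) *
        exp (θ * (Y (k + 1) ω - Y k ω)) := by
  simp only [freedmanExpProcess, ← exp_add]
  congr 1
  rw [predictableQuadVar_succ]
  ring

theorem stronglyMeasurable_freedmanExpProcess (hY : StronglyAdapted ℱ Y) (k : ℕ) :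
    StronglyMeasurable[ℱ k] (freedmanExpProcess μ ℱ Y θ c k) :=
  continuous_exp.comp_stronglyMeasurable
    ((((hY k).sub ((hY 0).mono (ℱ.mono k.zero_le))).const_mul θ).sub
      ((stronglyMeasurable_predictableQuadVar k.le_succ).const_mul c))

theorem MeasureTheory.Martingale.condExp_sub_ae_eq_zero (hY : Martingale Y ℱ μ) {i j : ℕ}
    (hij : i ≤ j) :
    μ[Y j - Y i|ℱ i] =ᵐ[μ] 0 := by
  filter_upwards [condExp_sub (hY.integrable j) (hY.integrable i) (ℱ i),
    hY.condExp_ae_eq hij, hY.condExp_ae_eq (le_refl i)] with ω h hj hi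
  rw [h, Pi.sub_apply, hj, hi, sub_self, Pi.zero_apply]

theorem condExp_freedmanExpProcess_succ_le [IsFiniteMeasure μ] (hY : Martingale Y ℱ μ)
    (hθ : 0 ≤ θ) (hθM : θ * M < 3) (hc : θ ^ 2 / (2 * (1 - θ * M / 3)) ≤ c) {k : ℕ}
    (hbdd : ∀ᵐ ω ∂μ, |Y (k + 1) ω - Y k ω| ≤ M)
    (hint : Integrable (freedmanExpProcess μ ℱ Y θ c k) μ) :
    Integrable (freedmanExpProcess μ ℱ Y θ c (k + 1)) μ ∧
      μ[freedmanExpProcess μ ℱ Y θ c (k + 1)|ℱ k] ≤ᵐ[μ] freedmanExpProcess μ ℱ Y θ c k := by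
  set Z := freedmanExpProcess μ ℱ Y θ c
  set X : Ω → ℝ := fun ω => Y (k + 1) ω - Y k ω
  set V := μ[fun ω => X ω ^ 2|ℱ k]
  set A : Ω → ℝ := fun ω => Z k ω * exp (-(c * V ω))
  set G : Ω → ℝ := fun ω => exp (θ * X ω)
  have hc0 : 0 ≤ c := (div_nonneg (sq_nonneg θ) (by linarith)).trans hc
  have hZ : Z (k + 1) = A * G := funext (freedmanExpProcess_succ k)
  have hV : 0 ≤ᵐ[μ] V := condExp_nonneg (ae_of_all _ fun ω => sq_nonneg _)
  have hAm : StronglyMeasurable[ℱ k] A :=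
    (stronglyMeasurable_freedmanExpProcess hY.stronglyAdapted k).mul
      (continuous_exp.comp_stronglyMeasurable (stronglyMeasurable_condExp.const_mul c).neg)
  have hAint : Integrable A μ := by
    refine hint.mono' (hAm.mono (ℱ.le k)).aestronglyMeasurable ?_
    filter_upwards [hV] with ω hVω
    have hZk : 0 ≤ Z k ω := (exp_pos _).le
    rw [Real.norm_of_nonneg (mul_nonneg hZk (exp_pos _).le)]
    exact mul_le_of_le_one_right hZk (exp_le_one_iff.2 (neg_nonpos.2 (mul_nonneg hc0 hVω)))
  have hX : Integrable X μ := (hY.integrable _).sub (hY.integrable _)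
  have hG : ∀ᵐ ω ∂μ, ‖G ω‖ ≤ exp (θ * M) := hbdd.mono fun ω h => norm_exp_mul_le_of_abs_le hθ h
  have hGm : AEStronglyMeasurable G μ :=
    continuous_exp.comp_aestronglyMeasurable (hX.1.const_mul θ)
  have hZint : Integrable (Z (k + 1)) μ := hZ ▸ hAint.mul_bdd hGm hG
  refine ⟨hZint, ?_⟩
  have hpull : μ[Z (k + 1)|ℱ k] =ᵐ[μ] A * μ[G|ℱ k] := by
    rw [hZ] at hZint ⊢
    exact condExp_mul_of_stronglyMeasurable_left hAm hZint (.of_bound hGm _ hG)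
  filter_upwards [hpull, condExp_exp_mul_le (ℱ.le k) hX (hY.condExp_sub_ae_eq_zero k.le_succ)
    hbdd hθ hθM, hV] with ω hpω hGω hVω
  have hA0 : 0 ≤ A ω := mul_nonneg (exp_pos _).le (exp_pos _).le
  calc μ[Z (k + 1)|ℱ k] ω = A ω * μ[G|ℱ k] ω := hpω
  _ ≤ A ω * (1 + c * V ω) := mul_le_mul_of_nonneg_left (hGω.trans (by gcongr)) hA0
  _ ≤ A ω * exp (c * V ω) :=
      mul_le_mul_of_nonneg_left ((add_comm _ _).trans_le (add_one_le_exp _)) hA0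
  _ = Z k ω := by rw [mul_assoc, ← exp_add, neg_add_cancel, exp_zero, mul_one]

theorem integrable_freedmanExpProcess_and_integral_le_one [IsProbabilityMeasure μ]
    (hY : Martingale Y ℱ μ) (hθ : 0 ≤ θ) (hθM : θ * M < 3)
    (hc : θ ^ 2 / (2 * (1 - θ * M / 3)) ≤ c) {n : ℕ}
    (hbdd : ∀ k < n, ∀ᵐ ω ∂μ, |Y (k + 1) ω - Y k ω| ≤ M) :
    Integrable (freedmanExpProcess μ ℱ Y θ c n) μ ∧
      ∫ ω, freedmanExpProcess μ ℱ Y θ c n ω ∂μ ≤ 1 := by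
  induction n with
  | zero =>
    have hZ0 : freedmanExpProcess μ ℱ Y θ c 0 = fun _ => 1 := by
      funext ω
      simp [freedmanExpProcess, predictableQuadVar]
    simp [hZ0]
  | succ n ih =>
    obtain ⟨hint, hle⟩ := ih fun k hk => hbdd k (by omega)
    obtain ⟨hint', hcond⟩ :=
      condExp_freedmanExpProcess_succ_le hY hθ hθM hc (hbdd n n.lt_add_one) hint
    refine ⟨hint', ?_⟩
    calc ∫ ω, freedmanExpProcess μ ℱ Y θ c (n + 1) ω ∂μ
        = ∫ ω, μ[freedmanExpProcess μ ℱ Y θ c (n + 1)|ℱ n] ω ∂μ :=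
          (integral_condExp (ℱ.le n)).symm
    _ ≤ ∫ ω, freedmanExpProcess μ ℱ Y θ c n ω ∂μ := integral_mono_ae integrable_condExp hint hcond
    _ ≤ 1 := hle

theorem integrable_exp_and_mgf_sub_le_of_predictableQuadVar_le [IsProbabilityMeasure μ]
    (hY : Martingale Y ℱ μ) (hθ : 0 ≤ θ) (hθM : θ * M < 3)
    (hc : θ ^ 2 / (2 * (1 - θ * M / 3)) ≤ c) {n : ℕ} {v : ℝ}
    (hbdd : ∀ k < n, ∀ᵐ ω ∂μ, |Y (k + 1) ω - Y k ω| ≤ M)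
    (hvar : ∀ᵐ ω ∂μ, predictableQuadVar μ ℱ Y n ω ≤ v) :
    Integrable (fun ω => exp (θ * (Y n ω - Y 0 ω))) μ ∧
      mgf (fun ω => Y n ω - Y 0 ω) μ θ ≤ exp (c * v) := by
  obtain ⟨hint, hle⟩ := integrable_freedmanExpProcess_and_integral_le_one hY hθ hθM hc hbdd
  have hc0 : 0 ≤ c := (div_nonneg (sq_nonneg θ) (by linarith)).trans hc
  have hpt : ∀ᵐ ω ∂μ,
      exp (θ * (Y n ω - Y 0 ω)) ≤ freedmanExpProcess μ ℱ Y θ c n ω * exp (c * v) := by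
    filter_upwards [hvar] with ω hω
    rw [freedmanExpProcess, ← exp_add, exp_le_exp]
    nlinarith [mul_le_mul_of_nonneg_left hω hc0]
  have hexp : Integrable (fun ω => exp (θ * (Y n ω - Y 0 ω))) μ := by
    refine (hint.mul_const (exp (c * v))).mono' ?_ ?_
    · exact continuous_exp.comp_aestronglyMeasurable
        ((((hY.integrable n).sub (hY.integrable 0)).1).const_mul θ)
    · filter_upwards [hpt] with ω hω
      rwa [Real.norm_of_nonneg (exp_pos _).le]
  refine ⟨hexp, ?_⟩
  calc mgf (fun ω => Y n ω - Y 0 ω) μ θ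
      ≤ ∫ ω, freedmanExpProcess μ ℱ Y θ c n ω * exp (c * v) ∂μ :=
        integral_mono_ae hexp (hint.mul_const _) hpt
  _ = (∫ ω, freedmanExpProcess μ ℱ Y θ c n ω ∂μ) * exp (c * v) := integral_mul_const _ _
  _ ≤ exp (c * v) := mul_le_of_le_one_left (exp_pos _).le hle

theorem freedman_upper_tail [IsProbabilityMeasure μ] (hY : Martingale Y ℱ μ) {n : ℕ}
    {M Δ lam : ℝ} (hM : 0 ≤ M) (hΔ : Δ ≠ 0) (hlam : 0 ≤ lam)
    (hbdd : ∀ k ∈ Finset.Icc 1 n, ∀ᵐ ω ∂μ, |Y k ω - Y (k - 1) ω| ≤ M)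
    (hvar : ∀ᵐ ω ∂μ, predictableQuadVar μ ℱ Y n ω ≤ Δ ^ 2) :
    μ {ω | lam ≤ Y n ω - Y 0 ω} ≤
      ENNReal.ofReal (exp (-(lam ^ 2) / (2 * (Δ ^ 2 + M * lam / 3)))) := by
  set D := Δ ^ 2 + M * lam / 3 with hDdef
  have hD : 0 < D := by positivity
  set θ := lam / D
  have hθM : θ * M < 3 := by
    have hΔ2 : 0 < Δ ^ 2 := by positivity
    rw [div_mul_eq_mul_div, div_lt_iff₀ hD]
    linarith [hDdef]
  have hbdd' : ∀ k < n, ∀ᵐ ω ∂μ, |Y (k + 1) ω - Y k ω| ≤ M := fun k hk => by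
    simpa using hbdd (k + 1) (Finset.mem_Icc.2 ⟨by omega, by omega⟩)
  obtain ⟨hexp, hmgf⟩ :=
    integrable_exp_and_mgf_sub_le_of_predictableQuadVar_le hY (by positivity) hθM le_rfl hbdd' hvar
  have hexponent : -θ * lam + θ ^ 2 / (2 * (1 - θ * M / 3)) * Δ ^ 2 = -(lam ^ 2) / (2 * D) := by
    have : 1 - θ * M / 3 = Δ ^ 2 / D := by
      simp only [θ, D]
      field_simp
      ring
    rw [this]
    simp only [θ]
    field_simp
    ring
  rw [← ENNReal.ofReal_toReal (measure_ne_top μ _), ← measureReal_def, ← hexponent, exp_add]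
  refine ENNReal.ofReal_le_ofReal ((measure_ge_le_exp_mul_mgf lam (by positivity) hexp).trans ?_)
  gcongr

end Freedman

/-- Freedman's martingale inequality (method of bounded variance): if the martingale
`Y₀, ..., Yₙ` has increments bounded by `M` and predictable quadratic variation
`Wₙ = ∑_{j=1}^n E[(Yⱼ - Yⱼ₋₁)² | F_{j-1}]` bounded by `Δ²`, then
`Pr[|Yₙ - Y₀| ≥ λ] ≤ 2 exp(-λ²/(2(Δ² + Mλ/3)))`. -/
theorem freedman_inequality {Ω : Type*} {m0 : MeasurableSpace Ω} (μ : Measure Ω)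
    [IsProbabilityMeasure μ] (ℱ : MeasureTheory.Filtration ℕ m0)
    (Y : ℕ → Ω → ℝ) (hY : Martingale Y ℱ μ) (n : ℕ) (M Δ lam : ℝ)
    (hM : 0 < M) (hΔ : 0 < Δ) (hlam : 0 < lam)
    (hbdd : ∀ k ∈ Finset.Icc 1 n, ∀ᵐ ω ∂μ, |Y k ω - Y (k - 1) ω| ≤ M)
    (hvar : ∀ᵐ ω ∂μ,
      ∑ j ∈ Finset.Icc 1 n, (μ[fun ω' => (Y j ω' - Y (j - 1) ω') ^ 2 | ℱ (j - 1)]) ω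
        ≤ Δ ^ 2) :
    μ {ω | lam ≤ |Y n ω - Y 0 ω|} ≤
      ENNReal.ofReal (2 * Real.exp (-(lam ^ 2) / (2 * (Δ ^ 2 + M * lam / 3)))) := by
  have hupper := freedman_upper_tail hY hM.le hΔ.ne' hlam.le hbdd hvar
  have hbdd_neg : ∀ k ∈ Finset.Icc 1 n, ∀ᵐ ω ∂μ, |(-Y) k ω - (-Y) (k - 1) ω| ≤ M :=
    fun k hk => (hbdd k hk).mono fun ω h => by
      rwa [Pi.neg_apply, Pi.neg_apply, Pi.neg_apply, Pi.neg_apply, neg_sub_neg, abs_sub_comm]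
  have hlower := freedman_upper_tail hY.neg hM.le hΔ.ne' hlam.le hbdd_neg
    (by rwa [predictableQuadVar_neg])
  have hsplit : {ω | lam ≤ |Y n ω - Y 0 ω|} ⊆
      {ω | lam ≤ Y n ω - Y 0 ω} ∪ {ω | lam ≤ (-Y) n ω - (-Y) 0 ω} := by
    intro ω hω
    rcases le_abs'.1 (show lam ≤ |Y n ω - Y 0 ω| from hω) with h | h
    · right
      change lam ≤ -Y n ω - -Y 0 ω
      linarith
    · exact Or.inl h
  calc μ {ω | lam ≤ |Y n ω - Y 0 ω|}
      ≤ μ {ω | lam ≤ Y n ω - Y 0 ω} + μ {ω | lam ≤ (-Y) n ω - (-Y) 0 ω} :=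
        (measure_mono hsplit).trans (measure_union_le _ _)
  _ ≤ _ := add_le_add hupper hlower
  _ = _ := by
      rw [← ENNReal.ofReal_add (exp_pos _).le (exp_pos _).le]
      congr 1
      ring
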